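/- Let ι be a finite index set, a : ι → ℝ with aᵢ ≥ 0 for all i, â ∈ ℝ, and let S ⊆ ι be a minimal cover whose complement carries zero weight; that is: ∑_{i∈S} aᵢ > â, aᵢ = 0 for all i ∉ S, and for every i ∈ S one has ∑_{j∈S, j≠i} a_j ≤ â. Then for every ω : ι → {0,1}: ∑_{i∈ι} aᵢ ωᵢ ≤ â if and only if ∑_{i∈S} ωᵢ ≤ |S| − 1. That is, the knapsack constraint is equivalent, on binary vectors, to the cover inequality of the minimal cover. -/
import Mathlib


/-- If `S` is a minimal cover for the knapsack constraint (removing any element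
of `S` drops the weight sum to at most `â`) and all coefficients outside `S`
vanish, then on binary vectors the knapsack constraint `∑ aᵢ ωᵢ ≤ â` is
equivalent to the cover inequality `∑_{i∈S} ωᵢ ≤ |S| − 1`. -/
theorem minimal_cover_inequality_equiv {ι : Type} [Fintype ι] [DecidableEq ι]
    (a : ι → ℝ) (ha : ∀ i, 0 ≤ a i) (ahat : ℝ)
    (S : Finset ι) (hcover : ∑ i ∈ S, a i > ahat)
    (hzero : ∀ i ∉ S, a i = 0)
    (hmin : ∀ i ∈ S, ∑ j ∈ S.erase i, a j ≤ ahat)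
    (ω : ι → ℝ) (hω : ∀ i, ω i = 0 ∨ ω i = 1) :
    (∑ i, a i * ω i ≤ ahat) ↔ (∑ i ∈ S, ω i ≤ (S.card : ℝ) - 1) := by
  classical
  set T : Finset ι := S.filter (fun i => ω i = 1) with hT
  have hTS : T ⊆ S := Finset.filter_subset _ _
  have hsum1 : ∑ i, a i * ω i = ∑ i ∈ T, a i := by
    rw [← Finset.sum_subset (Finset.subset_univ S)
      (fun i _ hi => by rw [hzero i hi, zero_mul])]
    rw [← Finset.sum_subset hTS (fun i hi hni => by
      rcases hω i with h | h
      · rw [h, mul_zero]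
      · exact absurd (Finset.mem_filter.mpr ⟨hi, h⟩) hni)]
    exact Finset.sum_congr rfl fun i hi => by
      rw [(Finset.mem_filter.mp hi).2, mul_one]
  have hsum2 : ∑ i ∈ S, ω i = (T.card : ℝ) := by
    rw [← Finset.sum_subset hTS (fun i hi hni => by
      rcases hω i with h | h
      · exact h
      · exact absurd (Finset.mem_filter.mpr ⟨hi, h⟩) hni)]
    rw [Finset.card_eq_sum_ones, Nat.cast_sum]
    exact Finset.sum_congr rfl fun i hi => by
      simp [(Finset.mem_filter.mp hi).2]
  rw [hsum1, hsum2]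
  constructor
  · intro h
    have hne : T ≠ S := by
      intro heq
      rw [heq] at h
      exact absurd h (not_le.mpr hcover)
    have hlt : T.card < S.card := Finset.card_lt_card (hTS.ssubset_of_ne hne)
    have : (T.card : ℝ) + 1 ≤ (S.card : ℝ) := by exact_mod_cast hlt
    linarith
  · intro h
    have hlt : T.card < S.card := by
      by_contra hle
      have : T.card = S.card := le_antisymm (Finset.card_le_card hTS) (not_lt.mp hle)
      rw [this] at h
      have hpos : 0 < S.card := by
        rcases Nat.eq_zero_or_pos S.card with h0 | h0
        · rw [Finset.card_eq_zero] at h0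
          subst h0
          simp at hcover
          linarith [hcover, le_refl ahat]
        · exact h0
      have : (1 : ℝ) ≤ (S.card : ℝ) := by exact_mod_cast hpos
      linarith
    have hne : T ≠ S := fun h => by rw [h] at hlt; exact lt_irrefl _ hlt
    obtain ⟨i, hiS, hiT⟩ : ∃ i ∈ S, i ∉ T := by
      by_contra hc
      push_neg at hc
      exact hne (le_antisymm hTS hc)
    have hsub : T ⊆ S.erase i := fun j hj =>
      Finset.mem_erase.mpr ⟨fun e => hiT (e ▸ hj), hTS hj⟩
    calc ∑ j ∈ T, a j ≤ ∑ j ∈ S.erase i, a j :=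
          Finset.sum_le_sum_of_subset_of_nonneg hsub (fun j _ _ => ha j)
      _ ≤ ahat := hmin i hiS
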